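/- arXiv:1812.02854 — 7 statements merged into one kernel-verified Lean document; each statement's English description precedes it below -/
import Mathlib

section
/- Assume the standing hypotheses, let s = (x,y) ∈ S, and let α, β ∈ ℕ₀ satisfy x = α·a + β·c with 0 ≤ α < c; set δ = y − α·b − β·d ∈ ℤ. Then δ ≥ 0, and the factorizations of s are exactly the triples (δ−t, α+c·t, β−a·t) for nonnegative integers t with a·t ≤ β and t ≤ δ; that is, for (p,q,r) ∈ ℕ₀³ one has p·u + q·v + r·w = s if and only if there exists t ∈ ℕ₀ with a·t ≤ β, t ≤ δ, p = δ−t, q = α+c·t, and r = β−a·t. -/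
/-- Standing hypotheses; s = (x,y) ∈ S, x = α·a + β·c with 0 ≤ α < c, and
δ = y − α·b − β·d ∈ ℤ.  Then δ ≥ 0 and the factorizations of s in S are exactly
the triples (δ−t, α+c·t, β−a·t) for t ∈ ℕ₀ with a·t ≤ β and t ≤ δ. -/
theorem embdim3_factorizations (a b c d : ℕ) (ha : 0 < a) (hb : 0 < b) (hc : 0 < c)
    (hstar : b * c = a * d + 1) (x y : ℕ)
    (hs : (x, y) ∈ AddSubmonoid.closure
        ({((0 : ℕ), (1 : ℕ)), (a, b), (c, d)} : Set (ℕ × ℕ)))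
    (α β : ℕ) (hx : x = α * a + β * c) (hα : α < c)
    (δ : ℤ) (hδ : δ = (y : ℤ) - α * b - β * d) :
    0 ≤ δ ∧
      ∀ p q r : ℕ,
        p • ((0 : ℕ), (1 : ℕ)) + q • ((a, b) : ℕ × ℕ) + r • ((c, d) : ℕ × ℕ) = (x, y) ↔
          ∃ t : ℕ, a * t ≤ β ∧ (t : ℤ) ≤ δ ∧ (p : ℤ) = δ - t ∧
            q = α + c * t ∧ r = β - a * t := by
  have hstar' : (b : ℤ) * c = (a : ℤ) * d + 1 := by exact_mod_cast hstar
  -- forward direction, as a reusable fact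
  have key : ∀ p q r : ℕ,
      p • ((0 : ℕ), (1 : ℕ)) + q • ((a, b) : ℕ × ℕ) + r • ((c, d) : ℕ × ℕ) = (x, y) →
      ∃ t : ℕ, a * t ≤ β ∧ (t : ℤ) ≤ δ ∧ (p : ℤ) = δ - t ∧
        q = α + c * t ∧ r = β - a * t := by
    intro p q r hfac
    have e1 : q * a + r * c = x := by
      have := congrArg Prod.fst hfac
      simpa [smul_eq_mul] using this
    have e2 : p + q * b + r * d = y := by
      have := congrArg Prod.snd hfac
      simpa [smul_eq_mul] using this
    have e1z : (q : ℤ) * a + r * c = α * a + β * c := by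
      have := e1; rw [hx] at this; exact_mod_cast this
    have e2z : (p : ℤ) + q * b + r * d = y := by exact_mod_cast e2
    have hco : IsCoprime (c : ℤ) (a : ℤ) := ⟨(b : ℤ), -(d : ℤ), by linarith⟩
    have hdvd : (c : ℤ) ∣ ((q : ℤ) - α) := by
      refine hco.dvd_of_dvd_mul_right ⟨(β : ℤ) - r, ?_⟩
      ring_nf
      linarith
    obtain ⟨tz, htz⟩ := hdvd
    have ht0 : 0 ≤ tz := by
      nlinarith [Int.natCast_nonneg q, (show (α : ℤ) < c by exact_mod_cast hα),
        (show (0 : ℤ) < c by exact_mod_cast hc)]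
    lift tz to ℕ using ht0 with t
    have hq : (q : ℤ) = α + c * t := by linarith
    have hcne : (c : ℤ) ≠ 0 := by exact_mod_cast hc.ne'
    have hr : (r : ℤ) = β - a * t := by
      have hmul : (c : ℤ) * ((r : ℤ) + a * t) = (c : ℤ) * β := by
        linear_combination e1z - a * hq
      have := mul_left_cancel₀ hcne hmul
      linarith
    have hp : (p : ℤ) = δ - t := by
      linear_combination e2z - (b : ℤ) * hq - (d : ℤ) * hr - hδ - (t : ℤ) * hstar'
    refine ⟨t, ?_, ?_, hp, ?_, ?_⟩
    · have : (a * t : ℤ) ≤ β := by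
        have := Int.natCast_nonneg r; push_cast; linarith
      exact_mod_cast this
    · have := Int.natCast_nonneg p; linarith
    · have : (q : ℤ) = ((α + c * t : ℕ) : ℤ) := by push_cast; linarith
      exact_mod_cast this
    · have hle : a * t ≤ β := by
        have : (a * t : ℤ) ≤ β := by
          have := Int.natCast_nonneg r; push_cast; linarith
        exact_mod_cast this
      have : (r : ℤ) = ((β - a * t : ℕ) : ℤ) := by
        rw [Int.ofNat_sub hle]; push_cast; linarith
      exact_mod_cast this
  -- extract some factorization from membership in the closure
  have hexgen : ∀ z : ℕ × ℕ, z ∈ AddSubmonoid.closure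
      ({((0 : ℕ), (1 : ℕ)), (a, b), (c, d)} : Set (ℕ × ℕ)) → ∃ p q r : ℕ,
      p • ((0 : ℕ), (1 : ℕ)) + q • ((a, b) : ℕ × ℕ) + r • ((c, d) : ℕ × ℕ) = z := by
    intro z hz
    induction hz using AddSubmonoid.closure_induction with
    | mem z hz =>
      simp only [Set.mem_insert_iff, Set.mem_singleton_iff] at hz
      rcases hz with rfl | rfl | rfl
      · exact ⟨1, 0, 0, by simp⟩
      · exact ⟨0, 1, 0, by simp⟩
      · exact ⟨0, 0, 1, by simp⟩
    | zero => exact ⟨0, 0, 0, by simp⟩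
    | add z w hz hw ihz ihw =>
      obtain ⟨p1, q1, r1, h1⟩ := ihz
      obtain ⟨p2, q2, r2, h2⟩ := ihw
      exact ⟨p1 + p2, q1 + q2, r1 + r2, by
        rw [add_smul, add_smul, add_smul, ← h1, ← h2]; abel⟩
  obtain ⟨p₀, q₀, r₀, hfac₀⟩ := hexgen (x, y) hs
  obtain ⟨t₀, -, -, hp₀, -, -⟩ := key p₀ q₀ r₀ hfac₀
  have hδ0 : 0 ≤ δ := by
    have := Int.natCast_nonneg p₀
    have := Int.natCast_nonneg t₀
    linarith
  refine ⟨hδ0, fun p q r => ⟨key p q r, ?_⟩⟩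
  rintro ⟨t, h1, h2, hp, hq, hr⟩
  subst hq hr
  have hfst : (α + c * t) * a + (β - a * t) * c = x := by
    zify [h1]; rw [hx]; push_cast; ring
  have hsnd : p + (α + c * t) * b + (β - a * t) * d = y := by
    zify [h1]
    linear_combination hp + hδ + (t : ℤ) * hstar'
  ext
  · simpa [smul_eq_mul] using hfst
  · simpa [smul_eq_mul] using hsnd
end

section
/- Assume the standing hypotheses, let s = (x,y) ∈ S, let α, β ∈ ℕ₀ satisfy x = α·a + β·c with 0 ≤ α < c, and set δ = y − α·b − β·d (a nonnegative integer). Then β ≤ a·δ if and only if x·b ≤ y·a (i.e., ⌊β/a⌋ ≤ δ exactly when φ(s) ≤ φ(v) = a/b). -/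
/-! Substituting `x = α a + β c` and `y = δ + α b + β d` gives
`x b - y a = β (b c - a d) - a δ = β - a δ`, since `b c - a d = 1`. -/

theorem cross_mul_sub_eq_sub_mul {a b c d x y α β δ : ℕ} (hstar : b * c = a * d + 1)
    (hx : x = α * a + β * c) (hδ : (δ : ℤ) = (y : ℤ) - α * b - β * d) :
    (x * b : ℤ) - y * a = β - a * δ := by
  have hstar' : (b * c : ℤ) = a * d + 1 := by exact_mod_cast hstar
  subst hx
  push_cast
  linear_combination β * hstar' + a * hδ

theorem embdim3_bound_comparison_general (a b c d : ℕ)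
    (hstar : b * c = a * d + 1) (x y : ℕ)
    (α β : ℕ) (hx : x = α * a + β * c)
    (δ : ℕ) (hδ : (δ : ℤ) = (y : ℤ) - α * b - β * d) :
    β ≤ a * δ ↔ x * b ≤ y * a := by
  have key := cross_mul_sub_eq_sub_mul hstar hx hδ
  zify
  constructor <;> intro h <;> linarith

/-- Standing hypotheses; s = (x,y) ∈ S, x = α·a + β·c with 0 ≤ α < c, and
δ = y − α·b − β·d a nonnegative integer.  Then β ≤ a·δ (i.e. ⌊β/a⌋ ≤ δ) if and
only if x·b ≤ y·a (i.e. φ(s) ≤ φ(v) = a/b). -/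
theorem embdim3_bound_comparison (a b c d : ℕ) (ha : 0 < a) (hb : 0 < b) (hc : 0 < c)
    (hstar : b * c = a * d + 1) (x y : ℕ)
    (hs : (x, y) ∈ AddSubmonoid.closure
        ({((0 : ℕ), (1 : ℕ)), (a, b), (c, d)} : Set (ℕ × ℕ)))
    (α β : ℕ) (hx : x = α * a + β * c) (hα : α < c)
    (δ : ℕ) (hδ : (δ : ℤ) = (y : ℤ) - α * b - β * d) :
    β ≤ a * δ ↔ x * b ≤ y * a :=
  embdim3_bound_comparison_general a b c d hstar x y α β hx δ hδ
end

section
/- Assume the standing hypotheses, let s = (x,y) ∈ S, let α, β ∈ ℕ₀ satisfy x = α·a + β·c with 0 ≤ α < c, and set δ = y − α·b − β·d (a nonnegative integer). Define T = ⌊β/a⌋ if x·b ≤ y·a, and T = δ if x·b ≥ y·a. Then the minimum and maximum of the set of factorization lengths L(s) are, as a pair, equal to the minimum and maximum of the two integers δ+α+β and δ+α+β + T·(c−a−1); i.e., L(s) has extreme values δ+α+β (attained at t = 0) and δ+α+β + T·(c−a−1) (attained at t = T), via the factorizations (δ−t, α+c·t, β−a·t). -/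
/-!
Since `b * c - a * d = 1`, the integers `a` and `c` are coprime, so the solutions of
`q * a + r * c = x` with `q, r ≥ 0` are `(α + c * t, β - a * t)` for `t ≥ 0`, and the second
coordinate then forces `p = δ - t`. Hence the factorizations of `s` are exactly
`(δ - t, α + c * t, β - a * t)` for `0 ≤ t ≤ min δ ⌊β / a⌋`, and their length
`δ + α + β + t * (c - a - 1)` is affine in `t`, so its extremes sit at the two ends.
The identity `x * b + a * δ = y * a + β` identifies `min δ ⌊β / a⌋` with `T`.
-/

open Set

theorem Nat.exists_eq_add_mul_of_mul_add_mul_eq {a c α β q r : ℕ} (hac : a.Coprime c)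
    (hα : α < c) (h : q * a + r * c = α * a + β * c) : ∃ t, q = α + c * t ∧ β = r + a * t := by
  have hmod : q ≡ α [MOD c] := by
    refine Nat.ModEq.cancel_right_of_coprime hac.symm ?_
    simpa [Nat.ModEq] using congrArg (· % c) h
  have hq : q = α + c * (q / c) := by rw [← Nat.mod_eq_of_lt hα, ← hmod, Nat.mod_add_div]
  refine ⟨q / c, hq, Nat.eq_of_mul_eq_mul_left (α.zero_le.trans_lt hα) ?_⟩
  rw [hq] at h
  linarith

theorem Nat.coprime_of_mul_eq_mul_add_one {a b c d : ℕ} (h : b * c = a * d + 1) : a.Coprime c :=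
  Nat.isCoprime_iff_coprime.mp
    ⟨-d, b, by linear_combination (by exact_mod_cast h : (b * c : ℤ) = a * d + 1)⟩

theorem Nat.le_min_div_iff {a β δ t : ℕ} (ha : 0 < a) : t ≤ min δ (β / a) ↔ t ≤ δ ∧ a * t ≤ β := by
  rw [le_min_iff, Nat.le_div_iff_mul_le ha, mul_comm]

theorem Nat.ite_le_mul_div_eq_min {a β δ : ℕ} (ha : 0 < a) :
    (if β ≤ a * δ then β / a else δ) = min δ (β / a) := by
  split_ifs with h
  · exact (min_eq_right ((Nat.div_le_div_right h).trans (Nat.mul_div_cancel_left δ ha).le)).symm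
  · exact (min_eq_left ((Nat.le_div_iff_mul_le ha).2 (by rw [mul_comm]; omega))).symm

theorem add_mul_mem_uIcc {R : Type*} [CommRing R] [LinearOrder R] [IsStrictOrderedRing R]
    {u v t T : R} (ht : 0 ≤ t) (htT : t ≤ T) : u + t * v ∈ uIcc u (u + T * v) := by
  rcases le_total 0 v with hv | hv
  · have h0 := mul_nonneg ht hv
    have hT := mul_le_mul_of_nonneg_right htT hv
    rw [uIcc_of_le (by linarith)]
    constructor <;> linarith
  · have h0 := mul_nonpos_of_nonneg_of_nonpos ht hv
    have hT := mul_le_mul_of_nonpos_right htT hv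
    rw [uIcc_of_ge (by linarith)]
    constructor <;> linarith

theorem sInf_sSup_image_Iic {f : ℕ → ℕ} {T : ℕ} {u v : ℤ}
    (hf : ∀ t ≤ T, (f t : ℤ) = u + t * v) :
    ((sInf (f '' Iic T) : ℕ) : ℤ) = min u (u + T * v) ∧
      ((sSup (f '' Iic T) : ℕ) : ℤ) = max u (u + T * v) := by
  have hends : ∀ t ≤ T, (f t : ℤ) ∈ uIcc (f 0 : ℤ) (f T) := fun t ht => by
    rw [hf t ht, hf 0 (Nat.zero_le T), hf T le_rfl, Nat.cast_zero, zero_mul, add_zero]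
    exact add_mul_mem_uIcc t.cast_nonneg (by exact_mod_cast ht)
  have hf0 : f 0 ∈ f '' Iic T := mem_image_of_mem f (Nat.zero_le T)
  have hfT : f T ∈ f '' Iic T := mem_image_of_mem f (le_refl T)
  have hleast : IsLeast (f '' Iic T) (min (f 0) (f T)) :=
    ⟨by rcases min_choice (f 0) (f T) with h | h <;> rw [h] <;> assumption,
      by rintro _ ⟨t, ht, rfl⟩; exact_mod_cast (hends t ht).1⟩
  have hgreatest : IsGreatest (f '' Iic T) (max (f 0) (f T)) :=
    ⟨by rcases max_choice (f 0) (f T) with h | h <;> rw [h] <;> assumption,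
      by rintro _ ⟨t, ht, rfl⟩; exact_mod_cast (hends t ht).2⟩
  rw [hleast.csInf_eq, hgreatest.csSup_eq, Nat.cast_min, Nat.cast_max, hf 0 (Nat.zero_le T),
    hf T le_rfl, Nat.cast_zero, zero_mul, add_zero]
  exact ⟨rfl, rfl⟩

namespace Embdim3

variable {a b c d : ℕ}

theorem factorization_iff (hstar : b * c = a * d + 1) {α β δ p q r : ℕ} (hα : α < c) :
    q * a + r * c = α * a + β * c ∧ p + q * b + r * d = α * b + β * d + δ ↔
      ∃ t, t ≤ δ ∧ a * t ≤ β ∧ p = δ - t ∧ q = α + c * t ∧ r = β - a * t := by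
  constructor
  · rintro ⟨hx, hy⟩
    obtain ⟨t, rfl, rfl⟩ := Nat.exists_eq_add_mul_of_mul_add_mul_eq
      (Nat.coprime_of_mul_eq_mul_add_one hstar) hα hx
    have hp : p + t = δ := by
      have : t * (b * c) = t * (a * d + 1) := by rw [hstar]
      nlinarith
    exact ⟨t, by omega, by omega, by omega, rfl, by omega⟩
  · rintro ⟨t, htδ, htβ, rfl, rfl, rfl⟩
    zify [htδ, htβ] at hstar ⊢
    exact ⟨by ring, by linear_combination (t : ℤ) * hstar⟩

theorem mul_le_mul_iff_le_mul (hstar : b * c = a * d + 1) {α β δ : ℕ} :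
    (α * a + β * c) * b ≤ (α * b + β * d + δ) * a ↔ β ≤ a * δ := by
  have key : (α * a + β * c) * b + a * δ = (α * b + β * d + δ) * a + β := by
    zify at hstar ⊢
    linear_combination (β : ℤ) * hstar
  omega

theorem lengths_eq_image (hstar : b * c = a * d + 1) (ha : 0 < a) {α β δ : ℕ} (hα : α < c) :
    {ℓ : ℕ | ∃ p q r : ℕ, p • ((0 : ℕ), (1 : ℕ)) + q • ((a, b) : ℕ × ℕ) + r • ((c, d) : ℕ × ℕ) =
        (α * a + β * c, α * b + β * d + δ) ∧ p + q + r = ℓ} =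
      (fun t => δ - t + (α + c * t) + (β - a * t)) '' Iic (min δ (β / a)) := by
  ext ℓ
  simp only [mem_ofPred_eq, mem_image, mem_Iic, Nat.le_min_div_iff ha, Prod.smul_mk, smul_eq_mul,
    Prod.mk_add_mk, Prod.mk.injEq, mul_zero, mul_one, zero_add]
  constructor
  · rintro ⟨p, q, r, hfac, rfl⟩
    obtain ⟨t, htδ, htβ, rfl, rfl, rfl⟩ := (factorization_iff hstar hα).1 hfac
    exact ⟨t, ⟨htδ, htβ⟩, rfl⟩
  · rintro ⟨t, ⟨htδ, htβ⟩, rfl⟩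
    exact ⟨_, _, _, (factorization_iff hstar hα).2 ⟨t, htδ, htβ, rfl, rfl, rfl⟩, rfl⟩

end Embdim3

theorem embdim3_extreme_lengths_general (a b c d : ℕ) (ha : 0 < a)
    (hstar : b * c = a * d + 1) (x y : ℕ)
    (α β : ℕ) (hx : x = α * a + β * c) (hα : α < c)
    (δ : ℕ) (hδ : (δ : ℤ) = (y : ℤ) - α * b - β * d)
    (T : ℕ) (hT : T = if x * b ≤ y * a then β / a else δ)
    (L : Set ℕ)
    (hL : L = {ℓ : ℕ | ∃ p q r : ℕ,
      p • ((0 : ℕ), (1 : ℕ)) + q • ((a, b) : ℕ × ℕ) + r • ((c, d) : ℕ × ℕ) = (x, y) ∧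
        p + q + r = ℓ}) :
    (((sInf L : ℕ) : ℤ) =
        min ((δ : ℤ) + α + β) ((δ : ℤ) + α + β + T * ((c : ℤ) - a - 1))) ∧
      (((sSup L : ℕ) : ℤ) =
        max ((δ : ℤ) + α + β) ((δ : ℤ) + α + β + T * ((c : ℤ) - a - 1))) := by
  have hy : y = α * b + β * d + δ := by zify; linarith
  subst hx hy
  simp only [Embdim3.mul_le_mul_iff_le_mul hstar, Nat.ite_le_mul_div_eq_min ha] at hT
  subst hT hL
  rw [Embdim3.lengths_eq_image hstar ha hα]
  refine sInf_sSup_image_Iic fun t ht => ?_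
  obtain ⟨htδ, htβ⟩ := (Nat.le_min_div_iff ha).1 ht
  push_cast [htδ, htβ]
  ring

/-- Standing hypotheses; s = (x,y) ∈ S, x = α·a + β·c with 0 ≤ α < c, and
δ = y − α·b − β·d a nonnegative integer.  With T = ⌊β/a⌋ if φ(s) ≤ a/b and
T = δ otherwise, the extreme factorization lengths of s are δ+α+β (at t = 0)
and δ+α+β + T·(c−a−1) (at t = T): the min and max of the length set L(s)
are the min and max of these two integers. -/
theorem embdim3_extreme_lengths (a b c d : ℕ) (ha : 0 < a) (hb : 0 < b) (hc : 0 < c)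
    (hstar : b * c = a * d + 1) (x y : ℕ)
    (hs : (x, y) ∈ AddSubmonoid.closure
        ({((0 : ℕ), (1 : ℕ)), (a, b), (c, d)} : Set (ℕ × ℕ)))
    (α β : ℕ) (hx : x = α * a + β * c) (hα : α < c)
    (δ : ℕ) (hδ : (δ : ℤ) = (y : ℤ) - α * b - β * d)
    (T : ℕ) (hT : T = if x * b ≤ y * a then β / a else δ)
    (L : Set ℕ)
    (hL : L = {ℓ : ℕ | ∃ p q r : ℕ,
      p • ((0 : ℕ), (1 : ℕ)) + q • ((a, b) : ℕ × ℕ) + r • ((c, d) : ℕ × ℕ) = (x, y) ∧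
        p + q + r = ℓ}) :
    (((sInf L : ℕ) : ℤ) =
        min ((δ : ℤ) + α + β) ((δ : ℤ) + α + β + T * ((c : ℤ) - a - 1))) ∧
      (((sSup L : ℕ) : ℤ) =
        max ((δ : ℤ) + α + β) ((δ : ℤ) + α + β + T * ((c : ℤ) - a - 1))) :=
  embdim3_extreme_lengths_general a b c d ha hstar x y α β hx hα δ hδ T hT L hL
end

section
/- Assume the standing hypotheses and additionally c = a + 1. Then every element of S has a unique factorization length: if (p,q,r) and (p',q',r') ∈ ℕ₀³ satisfy p·u + q·v + r·w = p'·u + q'·v + r'·w, then p+q+r = p'+q'+r'. In particular ρ(s) = 1 for every nonzero s ∈ S, so the elasticity of the monoid S is ρ(S) = 1. -/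
/-! The functional `(x, y) ↦ (1 - b) x + a y` takes the value `a` on each of the generators
`(0, 1)`, `(a, b)`, `(a + 1, d)` (on the last one this is exactly `b (a + 1) = a d + 1`), so it
sends every factorization of `s` to `a` times its length, which is therefore determined by `s`. -/

open Finset

theorem sum_eq_of_sum_nsmul_eq_of_map_eq {M ι : Type*} [AddCommMonoid M] [Fintype ι]
    (ψ : M →+ ℤ) {k : ℤ} (hk : k ≠ 0) {g : ι → M} (hg : ∀ i, ψ (g i) = k) {n m : ι → ℕ}
    (h : ∑ i, n i • g i = ∑ i, m i • g i) : ∑ i, n i = ∑ i, m i := by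
  have hψ := congrArg ψ h
  simp only [map_sum, map_nsmul, hg, nsmul_eq_mul, ← sum_mul] at hψ
  exact_mod_cast mul_right_cancel₀ hk hψ

def lengthWeight (a b : ℕ) : ℕ × ℕ →+ ℤ where
  toFun x := (1 - b : ℤ) * x.1 + a * x.2
  map_zero' := by simp
  map_add' x y := by simp only [Prod.fst_add, Prod.snd_add]; push_cast; ring

theorem lengthWeight_apply (a b x y : ℕ) :
    lengthWeight a b (x, y) = (1 - b : ℤ) * x + a * y := rfl

theorem lengthWeight_generator_eq (a b d : ℕ) (hstar : b * (a + 1) = a * d + 1) :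
    ∀ i, lengthWeight a b (![(0, 1), (a, b), (a + 1, d)] i) = a := by
  have hstar' : (b : ℤ) * (a + 1) = a * d + 1 := by exact_mod_cast hstar
  intro i
  fin_cases i <;> simp [lengthWeight_apply]
  · ring
  · linear_combination -hstar'

theorem embdim3_half_factorial_general (a b c d : ℕ) (ha : 0 < a)
    (hstar : b * c = a * d + 1) (hca : c = a + 1) :
    ∀ p q r p' q' r' : ℕ,
      p • ((0 : ℕ), (1 : ℕ)) + q • ((a, b) : ℕ × ℕ) + r • ((c, d) : ℕ × ℕ) =
          p' • ((0 : ℕ), (1 : ℕ)) + q' • ((a, b) : ℕ × ℕ) + r' • ((c, d) : ℕ × ℕ) →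
        p + q + r = p' + q' + r' := by
  subst hca
  intro p q r p' q' r' h
  have hlength := sum_eq_of_sum_nsmul_eq_of_map_eq (lengthWeight a b) (by exact_mod_cast ha.ne')
    (lengthWeight_generator_eq a b d hstar) (n := ![p, q, r]) (m := ![p', q', r'])
    (by rw [Fin.sum_univ_three, Fin.sum_univ_three]; exact h)
  rwa [Fin.sum_univ_three, Fin.sum_univ_three] at hlength

/-- Standing hypotheses with c = a + 1: every element of S = ⟨(0,1),(a,b),(c,d)⟩
has a unique factorization length, so ρ(s) = 1 for all nonzero s ∈ S and
the elasticity of the monoid is ρ(S) = 1. -/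
theorem embdim3_half_factorial (a b c d : ℕ) (ha : 0 < a) (hb : 0 < b) (hc : 0 < c)
    (hstar : b * c = a * d + 1) (hca : c = a + 1) :
    ∀ p q r p' q' r' : ℕ,
      p • ((0 : ℕ), (1 : ℕ)) + q • ((a, b) : ℕ × ℕ) + r • ((c, d) : ℕ × ℕ) =
          p' • ((0 : ℕ), (1 : ℕ)) + q' • ((a, b) : ℕ × ℕ) + r' • ((c, d) : ℕ × ℕ) →
        p + q + r = p' + q' + r' :=
  embdim3_half_factorial_general a b c d ha hstar hca
end

section
/- Assume the standing hypotheses, let s = (x,y) ∈ S with s ≠ (0,0) and x·b ≤ y·a (i.e., φ(s) ≤ a/b), let τ = sign(c−a−1) ∈ {−1,0,1}, and let k be a positive integer divisible by a·c. Then the elasticity of k·s = (k·x, k·y) is ρ(k·s) = ( (c·(y·a − x·(b−1))) / (a·(y·c − x·(d−1))) )^τ, an identity of rational numbers (with the integer exponent τ; in particular ρ(k·s) is independent of k). -/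
/-!
For a factorization `(p, q, r)` of `(X, Y)` of length `ℓ`, eliminating `p` and using
`b·c − a·d = 1` gives

  `a·ℓ + r·(c − a − 1) = a·Y − (b − 1)·X`  and  `c·ℓ = c·Y − (d − 1)·X + q·(c − a − 1)`.

So every length differs from the length of the factorization avoiding `w` (resp. `v`) by a
nonnegative multiple of `−(c − a − 1)` (resp. `c − a − 1`), and these two factorizations realise
the extreme lengths, their roles depending on the sign of `c − a − 1`. For `k·s` with `a·c ∣ k`
both exist: the one avoiding `w` because `x·b ≤ y·a`, the one avoiding `v` because this forces
`x·d ≤ y·c`. Their lengths are `(k/a)·(y·a − x·(b − 1))` and `(k/c)·(y·c − x·(d − 1))`.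
-/

def factorizationLengths (a b c d X Y : ℕ) : Set ℕ :=
  {ℓ : ℕ | ∃ p q r : ℕ,
    p • ((0 : ℕ), (1 : ℕ)) + q • ((a, b) : ℕ × ℕ) + r • ((c, d) : ℕ × ℕ) = (X, Y) ∧
      p + q + r = ℓ}

section Factorizations

variable {a b c d X Y ℓ : ℕ}

theorem mem_factorizationLengths_iff :
    ℓ ∈ factorizationLengths a b c d X Y ↔
      ∃ p q r : ℕ, q * a + r * c = X ∧ p + q * b + r * d = Y ∧ p + q + r = ℓ := by
  simp only [factorizationLengths, Set.mem_ofPred_eq, Prod.smul_mk, smul_eq_mul, Prod.mk_add_mk,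
    Prod.mk.injEq, mul_zero, mul_one, zero_add, and_assoc]

theorem eq_zero_of_zero_mem_factorizationLengths (h : 0 ∈ factorizationLengths a b c d X Y) :
    X = 0 ∧ Y = 0 := by
  obtain ⟨p, q, r, hX, hY, hℓ⟩ := mem_factorizationLengths_iff.mp h
  obtain ⟨rfl, rfl, rfl⟩ : p = 0 ∧ q = 0 ∧ r = 0 := by omega
  omega

theorem exists_mem_factorizationLengths_left {m : ℕ} (hX : m * a = X) (hY : m * b ≤ Y) :
    ∃ ℓ ∈ factorizationLengths a b c d X Y, (a : ℤ) * ℓ = a * Y - ((b : ℤ) - 1) * X := by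
  refine ⟨Y - m * b + m, mem_factorizationLengths_iff.mpr ⟨Y - m * b, m, 0, ?_, ?_, rfl⟩, ?_⟩
  · simpa using hX
  · omega
  · subst hX
    push_cast [hY]
    ring

theorem exists_mem_factorizationLengths_right {n : ℕ} (hX : n * c = X) (hY : n * d ≤ Y) :
    ∃ ℓ ∈ factorizationLengths a b c d X Y, (c : ℤ) * ℓ = c * Y - ((d : ℤ) - 1) * X := by
  refine ⟨Y - n * d + n, mem_factorizationLengths_iff.mpr ⟨Y - n * d, 0, n, ?_, ?_, ?_⟩, ?_⟩
  · simpa using hX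
  · omega
  · omega
  · subst hX
    push_cast [hY]
    ring

section Identities

variable (hstar : b * c = a * d + 1)
include hstar

theorem exists_length_identity_left (hℓ : ℓ ∈ factorizationLengths a b c d X Y) :
    ∃ r : ℕ, (a : ℤ) * ℓ + r * ((c : ℤ) - a - 1) = a * Y - ((b : ℤ) - 1) * X := by
  obtain ⟨p, q, r, rfl, rfl, rfl⟩ := mem_factorizationLengths_iff.mp hℓ
  have hstar' : (b : ℤ) * c = a * d + 1 := by exact_mod_cast hstar
  exact ⟨r, by push_cast; linear_combination (r : ℤ) * hstar'⟩

theorem exists_length_identity_right (hℓ : ℓ ∈ factorizationLengths a b c d X Y) :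
    ∃ q : ℕ, (c : ℤ) * ℓ = c * Y - ((d : ℤ) - 1) * X + q * ((c : ℤ) - a - 1) := by
  obtain ⟨p, q, r, rfl, rfl, rfl⟩ := mem_factorizationLengths_iff.mp hℓ
  have hstar' : (b : ℤ) * c = a * d + 1 := by exact_mod_cast hstar
  exact ⟨q, by push_cast; linear_combination (-(q : ℤ)) * hstar'⟩

end Identities

end Factorizations

theorem sSup_div_sInf_eq_zpow_sign {L : Set ℕ} {ℓ₁ ℓ₂ : ℕ} {α β e : ℤ} (hα : 0 < α)
    (hβ : 0 < β) (h₁ : ℓ₁ ∈ L) (h₂ : ℓ₂ ∈ L) (h₁0 : ℓ₁ ≠ 0)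
    (hL₁ : ∀ ℓ ∈ L, ∃ r : ℕ, α * ℓ + r * e = α * ℓ₁)
    (hL₂ : ∀ ℓ ∈ L, ∃ q : ℕ, β * ℓ = β * ℓ₂ + q * e) :
    ((sSup L : ℕ) : ℚ) / (sInf L : ℕ) = ((ℓ₁ : ℚ) / ℓ₂) ^ e.sign := by
  rcases lt_trichotomy e 0 with he | rfl | he
  · have hmax : IsGreatest L ℓ₂ := ⟨h₂, fun ℓ hℓ => by
      obtain ⟨q, hq⟩ := hL₂ ℓ hℓ
      have : (ℓ : ℤ) ≤ ℓ₂ := by nlinarith [(q.cast_nonneg : (0 : ℤ) ≤ q)]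
      exact_mod_cast this⟩
    have hmin : IsLeast L ℓ₁ := ⟨h₁, fun ℓ hℓ => by
      obtain ⟨r, hr⟩ := hL₁ ℓ hℓ
      have : (ℓ₁ : ℤ) ≤ ℓ := by nlinarith [(r.cast_nonneg : (0 : ℤ) ≤ r)]
      exact_mod_cast this⟩
    rw [hmax.csSup_eq, hmin.csInf_eq, Int.sign_eq_neg_one_of_neg he, zpow_neg_one, inv_div]
  · have hconst : ∀ ℓ ∈ L, ℓ = ℓ₁ := fun ℓ hℓ => by
      obtain ⟨r, hr⟩ := hL₁ ℓ hℓ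
      simpa [hα.ne'] using hr
    rw [(show IsGreatest L ℓ₁ from ⟨h₁, fun ℓ hℓ => (hconst ℓ hℓ).le⟩).csSup_eq,
      (show IsLeast L ℓ₁ from ⟨h₁, fun ℓ hℓ => (hconst ℓ hℓ).ge⟩).csInf_eq, Int.sign_zero,
      zpow_zero, div_self (by exact_mod_cast h₁0)]
  · have hmax : IsGreatest L ℓ₁ := ⟨h₁, fun ℓ hℓ => by
      obtain ⟨r, hr⟩ := hL₁ ℓ hℓ
      have : (ℓ : ℤ) ≤ ℓ₁ := by nlinarith [(r.cast_nonneg : (0 : ℤ) ≤ r)]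
      exact_mod_cast this⟩
    have hmin : IsLeast L ℓ₂ := ⟨h₂, fun ℓ hℓ => by
      obtain ⟨q, hq⟩ := hL₂ ℓ hℓ
      have : (ℓ₂ : ℤ) ≤ ℓ := by nlinarith [(q.cast_nonneg : (0 : ℤ) ≤ q)]
      exact_mod_cast this⟩
    rw [hmax.csSup_eq, hmin.csInf_eq, Int.sign_eq_one_of_pos he, zpow_one]

theorem cast_div_eq_of_length_identities {a b c d x y j ℓ₁ ℓ₂ : ℕ} (ha : 0 < a) (hc : 0 < c)
    (hj : j ≠ 0)
    (h₁ : (a : ℤ) * ℓ₁ = a * ↑(a * c * j * y) - ((b : ℤ) - 1) * ↑(a * c * j * x))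
    (h₂ : (c : ℤ) * ℓ₂ = c * ↑(a * c * j * y) - ((d : ℤ) - 1) * ↑(a * c * j * x)) :
    (ℓ₁ : ℚ) / ℓ₂ = c * (y * a - x * (b - 1)) / (a * (y * c - x * (d - 1))) := by
  have hℓ₁ : (ℓ₁ : ℚ) = c * (y * a - x * (b - 1)) * j := by
    have h : (a : ℚ) * ℓ₁ = a * (a * c * j * y) - (b - 1) * (a * c * j * x) := by
      exact_mod_cast h₁
    exact mul_left_cancel₀ (by exact_mod_cast ha.ne' : (a : ℚ) ≠ 0) (by linear_combination h)
  have hℓ₂ : (ℓ₂ : ℚ) = a * (y * c - x * (d - 1)) * j := by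
    have h : (c : ℚ) * ℓ₂ = c * (a * c * j * y) - (d - 1) * (a * c * j * x) := by
      exact_mod_cast h₂
    exact mul_left_cancel₀ (by exact_mod_cast hc.ne' : (c : ℚ) ≠ 0) (by linear_combination h)
  rw [hℓ₁, hℓ₂, mul_div_mul_right _ _ (by exact_mod_cast hj)]

theorem embdim3_elasticity_of_multiples_low_general (a b c d : ℕ) (ha : 0 < a)
    (hc : 0 < c) (hstar : b * c = a * d + 1) (x y : ℕ)
    (hs0 : (x, y) ≠ ((0 : ℕ), (0 : ℕ))) (hxy : x * b ≤ y * a)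
    (τ : ℤ) (hτ : τ = Int.sign ((c : ℤ) - a - 1))
    (L : ℕ → Set ℕ)
    (hL : ∀ k, L k = {ℓ : ℕ | ∃ p q r : ℕ,
      p • ((0 : ℕ), (1 : ℕ)) + q • ((a, b) : ℕ × ℕ) + r • ((c, d) : ℕ × ℕ) =
          (k * x, k * y) ∧ p + q + r = ℓ}) :
    ∀ k : ℕ, 0 < k → a * c ∣ k →
      ((sSup (L k) : ℕ) : ℚ) / ((sInf (L k) : ℕ) : ℚ) =
        ((c : ℚ) * ((y : ℚ) * a - (x : ℚ) * ((b : ℚ) - 1)) /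
            ((a : ℚ) * ((y : ℚ) * c - (x : ℚ) * ((d : ℚ) - 1)))) ^ τ := by
  rintro k hk ⟨j, rfl⟩
  have hxd : x * d ≤ y * c := Nat.le_of_mul_le_mul_left (by nlinarith) ha
  have hLk : L (a * c * j) = factorizationLengths a b c d (a * c * j * x) (a * c * j * y) := hL _
  obtain ⟨ℓ₁, hℓ₁, hℓ₁_eq⟩ : ∃ ℓ ∈ factorizationLengths a b c d (a * c * j * x) (a * c * j * y),
      (a : ℤ) * ℓ = a * ↑(a * c * j * y) - ((b : ℤ) - 1) * ↑(a * c * j * x) :=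
    exists_mem_factorizationLengths_left (m := c * j * x) (by ring)
      (by nlinarith [Nat.mul_le_mul_left (c * j) hxy])
  obtain ⟨ℓ₂, hℓ₂, hℓ₂_eq⟩ : ∃ ℓ ∈ factorizationLengths a b c d (a * c * j * x) (a * c * j * y),
      (c : ℤ) * ℓ = c * ↑(a * c * j * y) - ((d : ℤ) - 1) * ↑(a * c * j * x) :=
    exists_mem_factorizationLengths_right (n := a * j * x) (by ring)
      (by nlinarith [Nat.mul_le_mul_left (a * j) hxd])
  have hℓ₁0 : ℓ₁ ≠ 0 := by
    rintro rfl
    obtain ⟨hx, hy⟩ := eq_zero_of_zero_mem_factorizationLengths hℓ₁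
    exact hs0 (by
      rw [(mul_eq_zero.mp hx).resolve_left hk.ne', (mul_eq_zero.mp hy).resolve_left hk.ne'])
  rw [hLk, hτ, sSup_div_sInf_eq_zpow_sign (α := a) (β := c) (by exact_mod_cast ha)
      (by exact_mod_cast hc) hℓ₁ hℓ₂ hℓ₁0
      (fun ℓ hℓ => (exists_length_identity_left hstar hℓ).imp fun _ h => h.trans hℓ₁_eq.symm)
      (fun ℓ hℓ => (exists_length_identity_right hstar hℓ).imp fun _ h => by rw [h, hℓ₂_eq]),
    cast_div_eq_of_length_identities ha hc (Nat.pos_of_mul_pos_left hk).ne' hℓ₁_eq hℓ₂_eq]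

/-- Standing hypotheses; s = (x,y) ∈ S nonzero with φ(s) ≤ a/b (i.e. x·b ≤ y·a),
τ = sign(c−a−1).  For every positive k divisible by a·c, the elasticity of k·s
(the ratio of the maximal to the minimal factorization length of (k·x, k·y))
equals ( c·(y·a − x·(b−1)) / (a·(y·c − x·(d−1))) )^τ, independently of k. -/
theorem embdim3_elasticity_of_multiples_low (a b c d : ℕ) (ha : 0 < a)
    (hb : 0 < b) (hc : 0 < c) (hstar : b * c = a * d + 1) (x y : ℕ)
    (hs : (x, y) ∈ AddSubmonoid.closure
        ({((0 : ℕ), (1 : ℕ)), (a, b), (c, d)} : Set (ℕ × ℕ)))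
    (hs0 : (x, y) ≠ ((0 : ℕ), (0 : ℕ))) (hxy : x * b ≤ y * a)
    (τ : ℤ) (hτ : τ = Int.sign ((c : ℤ) - a - 1))
    (L : ℕ → Set ℕ)
    (hL : ∀ k, L k = {ℓ : ℕ | ∃ p q r : ℕ,
      p • ((0 : ℕ), (1 : ℕ)) + q • ((a, b) : ℕ × ℕ) + r • ((c, d) : ℕ × ℕ) =
          (k * x, k * y) ∧ p + q + r = ℓ}) :
    ∀ k : ℕ, 0 < k → a * c ∣ k →
      ((sSup (L k) : ℕ) : ℚ) / ((sInf (L k) : ℕ) : ℚ) =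
        ((c : ℚ) * ((y : ℚ) * a - (x : ℚ) * ((b : ℚ) - 1)) /
            ((a : ℚ) * ((y : ℚ) * c - (x : ℚ) * ((d : ℚ) - 1)))) ^ τ :=
  embdim3_elasticity_of_multiples_low_general a b c d ha hc hstar x y hs0 hxy τ hτ L hL
end

section
/- Assume the standing hypotheses, let s = (x,y) ∈ S with s ≠ (0,0) and y·a ≤ x·b (i.e., φ(s) ≥ a/b), let τ = sign(c−a−1) ∈ {−1,0,1}, and let k be a positive integer divisible by c. Then the elasticity of k·s = (k·x, k·y) is ρ(k·s) = ( c·(y·(c−a) − x·(d−b)) / (y·c − x·(d−1)) )^τ, an identity of rational numbers (with the integer exponent τ; in particular ρ(k·s) is independent of k). -/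
set_option maxHeartbeats 1000000

/-- Standing hypotheses; s = (x,y) ∈ S nonzero with φ(s) ≥ a/b (i.e. y·a ≤ x·b),
τ = sign(c−a−1).  For every positive k divisible by c, the elasticity of k·s
(the ratio of the maximal to the minimal factorization length of (k·x, k·y))
equals ( c·(y·(c−a) − x·(d−b)) / (y·c − x·(d−1)) )^τ, independently of k. -/

theorem embdim3_elasticity_of_multiples_high (a b c d : ℕ) (ha : 0 < a)
    (hb : 0 < b) (hc : 0 < c) (hstar : b * c = a * d + 1) (x y : ℕ)
    (hs : (x, y) ∈ AddSubmonoid.closure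
        ({((0 : ℕ), (1 : ℕ)), (a, b), (c, d)} : Set (ℕ × ℕ)))
    (hs0 : (x, y) ≠ ((0 : ℕ), (0 : ℕ))) (hxy : y * a ≤ x * b)
    (τ : ℤ) (hτ : τ = Int.sign ((c : ℤ) - a - 1))
    (L : ℕ → Set ℕ)
    (hL : ∀ k, L k = {ℓ : ℕ | ∃ p q r : ℕ,
      p • ((0 : ℕ), (1 : ℕ)) + q • ((a, b) : ℕ × ℕ) + r • ((c, d) : ℕ × ℕ) =
          (k * x, k * y) ∧ p + q + r = ℓ}) :
    ∀ k : ℕ, 0 < k → c ∣ k →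
      ((sSup (L k) : ℕ) : ℚ) / ((sInf (L k) : ℕ) : ℚ) =
        ((c : ℚ) * ((y : ℚ) * ((c : ℚ) - a) - (x : ℚ) * ((d : ℚ) - b)) /
            ((y : ℚ) * c - (x : ℚ) * ((d : ℚ) - 1))) ^ τ := by
  intro k hk hck
  obtain ⟨m, rfl⟩ := hck
  have hm0 : 0 < m := by
    rcases Nat.eq_zero_or_pos m with rfl | h
    · simp at hk
    · exact h
  have hx0 : 0 < x := by
    rcases Nat.eq_zero_or_pos x with rfl | h
    · have hy : y = 0 := by
        have h0 : y * a ≤ 0 := by simpa using hxy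
        have := le_trans (Nat.le_mul_of_pos_right y ha) h0
        omega
      exact absurd (by simp [hy]) hs0
    · exact h
  have hdxy : d * x ≤ c * y := by
    refine AddSubmonoid.closure_induction (motive := fun z _ => d * z.1 ≤ c * z.2) ?_ ?_ ?_ hs
    · rintro z (h | h | h) <;> subst h <;> simp <;> nlinarith
    · simp
    · rintro z w _ _ h1 h2
      simp only [Prod.fst_add, Prod.snd_add]
      nlinarith
  -- integer versions of hypotheses
  have hstarZ : (b : ℤ) * c = a * d + 1 := by exact_mod_cast hstar
  have hstarQ : (b : ℚ) * c = a * d + 1 := by exact_mod_cast hstar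
  have hxyZ : (y : ℤ) * a ≤ x * b := by exact_mod_cast hxy
  set p0 : ℕ := m * (c * y - d * x) with hp0
  set r0 : ℕ := m * x with hr0
  have hp0Z : (p0 : ℤ) = m * ((c : ℤ) * y - d * x) := by
    rw [hp0]; push_cast [Nat.cast_sub hdxy]; ring
  have hr0Z : (r0 : ℤ) = m * x := by rw [hr0]; push_cast; ring
  have hp0Q : (p0 : ℚ) = m * ((c : ℚ) * y - d * x) := by
    rw [hp0]; push_cast [Nat.cast_sub hdxy]; ring
  have hr0Q : (r0 : ℚ) = m * x := by rw [hr0]; push_cast; ring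
  have hap0 : a * p0 ≤ r0 := by
    have h1 : a * (c * y - d * x) ≤ x := by
      have h2 : (a : ℤ) * ((c : ℤ) * y - d * x) ≤ x := by nlinarith [hxyZ, hstarZ]
      have h3 : ((a * (c * y - d * x) : ℕ) : ℤ) = (a : ℤ) * ((c : ℤ) * y - d * x) := by
        push_cast [Nat.cast_sub hdxy]; ring
      exact_mod_cast h3 ▸ h2
    calc a * p0 = m * (a * (c * y - d * x)) := by rw [hp0]; ring
      _ ≤ m * x := Nat.mul_le_mul_left m h1
      _ = r0 := hr0.symm
  -- the set of lengths
  set lf : ℕ → ℕ := fun t => (p0 - t) + c * t + (r0 - a * t) with hlf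
  have hchar : ∀ l, l ∈ L (c * m) ↔ ∃ t, t ≤ p0 ∧ l = lf t := by
    intro l
    rw [hL]
    constructor
    · rintro ⟨p, q, r, heq, rfl⟩
      simp only [Prod.smul_mk, smul_eq_mul, Prod.mk_add_mk, Prod.mk.injEq, mul_zero, mul_one,
        zero_add] at heq
      obtain ⟨h1, h2⟩ := heq
      have hco : Nat.Coprime c a := by
        have h3 : Nat.gcd c a ∣ b * c := Dvd.dvd.mul_left (Nat.gcd_dvd_left c a) b
        have h4 : Nat.gcd c a ∣ a * d := Dvd.dvd.mul_right (Nat.gcd_dvd_right c a) d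
        have h5 := Nat.dvd_sub h3 h4
        rw [hstar] at h5
        simpa using h5
      have hcq : c ∣ q := by
        refine hco.dvd_of_dvd_mul_right ?_
        have h6 : q * a = c * m * x - r * c := by omega
        rw [h6]
        exact Nat.dvd_sub ⟨m * x, by ring⟩ (Dvd.intro_left r rfl)
      obtain ⟨t, rfl⟩ := hcq
      have h1Z : (c : ℤ) * t * a + r * c = c * m * x := by exact_mod_cast h1
      have h2Z : (p : ℤ) + c * t * b + r * d = c * m * y := by
        push_cast
        push_cast at h2
        linarith [h2]
      have hrZ : (r : ℤ) = r0 - a * t := by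
        have h7 : (c : ℤ) * ((t : ℤ) * a + r - m * x) = 0 := by linear_combination h1Z
        have h8 : ((t : ℤ) * a + r - m * x) = 0 := by
          rcases mul_eq_zero.1 h7 with h | h
          · exact absurd h (by exact_mod_cast hc.ne')
          · exact h
        rw [hr0Z]; linarith
      have hpZ : (p : ℤ) = p0 - t := by
        linear_combination h2Z - (d : ℤ) * hrZ - hp0Z - (t : ℤ) * hstarZ - (d : ℤ) * hr0Z
      have hrn : r + a * t = r0 := by
        have : (r : ℤ) + a * t = r0 := by rw [hrZ]; ring
        exact_mod_cast this
      have hpn : p + t = p0 := by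
        have : (p : ℤ) + t = p0 := by rw [hpZ]; ring
        exact_mod_cast this
      refine ⟨t, by omega, ?_⟩
      simp only [hlf]
      omega
    · rintro ⟨t, ht, rfl⟩
      have hat : a * t ≤ r0 := le_trans (Nat.mul_le_mul_left a ht) hap0
      refine ⟨p0 - t, c * t, r0 - a * t, ?_, rfl⟩
      simp only [Prod.smul_mk, smul_eq_mul, Prod.mk_add_mk, Prod.mk.injEq, mul_zero, mul_one,
        zero_add]
      constructor
      · have : ((c * t * a + (r0 - a * t) * c : ℕ) : ℤ) = ((c * m * x : ℕ) : ℤ) := by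
          push_cast [Nat.cast_sub hat]
          linear_combination (c : ℤ) * hr0Z
        exact_mod_cast this
      · have : (((p0 - t) + c * t * b + (r0 - a * t) * d : ℕ) : ℤ) = ((c * m * y : ℕ) : ℤ) := by
          push_cast [Nat.cast_sub hat, Nat.cast_sub ht]
          linear_combination hp0Z + (d : ℤ) * hr0Z + (t : ℤ) * hstarZ
        exact_mod_cast this
  have hlfZ : ∀ t, t ≤ p0 → (lf t : ℤ) = (p0 : ℤ) + r0 + ((c : ℤ) - a - 1) * t := by
    intro t ht
    have hat : a * t ≤ r0 := le_trans (Nat.mul_le_mul_left a ht) hap0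
    simp only [hlf]
    push_cast [Nat.cast_sub ht, Nat.cast_sub hat]
    ring
  have hmem : ∀ t, t ≤ p0 → lf t ∈ L (c * m) := fun t ht => (hchar _).2 ⟨t, ht, rfl⟩
  -- positivity
  have hlA0 : 0 < lf 0 := by
    have : lf 0 = p0 + r0 := by simp [hlf]
    rw [this, hr0]
    positivity
  have hlB0 : 0 < lf p0 := by
    have hv : lf p0 = c * p0 + (r0 - a * p0) := by simp [hlf]
    rcases Nat.eq_zero_or_pos p0 with h0 | h0
    · rw [hv, h0]
      simpa [hr0] using Nat.mul_pos hm0 hx0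
    · rw [hv]
      have := Nat.mul_pos hc h0
      omega
  -- sup and inf
  have hub : ∀ l ∈ L (c * m), l ≤ max (lf 0) (lf p0) := by
    intro l hl
    obtain ⟨t, ht, rfl⟩ := (hchar l).1 hl
    rcases le_or_gt ((c : ℤ) - a - 1) 0 with he | he
    · refine le_trans ?_ (le_max_left _ _)
      have hZ : (lf t : ℤ) ≤ (lf 0 : ℤ) := by
        rw [hlfZ t ht, hlfZ 0 (Nat.zero_le _)]
        have hmul : ((c : ℤ) - a - 1) * t ≤ 0 :=
          mul_nonpos_iff.mpr (Or.inr ⟨he, Int.natCast_nonneg t⟩)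
        push_cast
        linarith
      exact_mod_cast hZ
    · refine le_trans ?_ (le_max_right _ _)
      have hZ : (lf t : ℤ) ≤ (lf p0 : ℤ) := by
        rw [hlfZ t ht, hlfZ p0 le_rfl]
        have htZ : (t : ℤ) ≤ p0 := by exact_mod_cast ht
        nlinarith [htZ, he]
      exact_mod_cast hZ
  have hlb : ∀ l ∈ L (c * m), min (lf 0) (lf p0) ≤ l := by
    intro l hl
    obtain ⟨t, ht, rfl⟩ := (hchar l).1 hl
    rcases le_or_gt ((c : ℤ) - a - 1) 0 with he | he
    · refine le_trans (min_le_right _ _) ?_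
      have hZ : (lf p0 : ℤ) ≤ (lf t : ℤ) := by
        rw [hlfZ t ht, hlfZ p0 le_rfl]
        have htZ : (t : ℤ) ≤ p0 := by exact_mod_cast ht
        nlinarith [mul_le_mul_of_nonpos_left htZ he]
      exact_mod_cast hZ
    · refine le_trans (min_le_left _ _) ?_
      have hZ : (lf 0 : ℤ) ≤ (lf t : ℤ) := by
        rw [hlfZ t ht, hlfZ 0 (Nat.zero_le _)]
        have hmul : (0 : ℤ) ≤ ((c : ℤ) - a - 1) * t :=
          mul_nonneg he.le (Int.natCast_nonneg t)
        push_cast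
        linarith
      exact_mod_cast hZ
  have hSup : sSup (L (c * m)) = max (lf 0) (lf p0) := by
    refine IsGreatest.csSup_eq ⟨?_, hub⟩
    rcases max_cases (lf 0) (lf p0) with ⟨h, _⟩ | ⟨h, _⟩ <;> rw [h]
    exacts [hmem 0 (Nat.zero_le _), hmem p0 le_rfl]
  have hInf : sInf (L (c * m)) = min (lf 0) (lf p0) := by
    refine IsLeast.csInf_eq ⟨?_, hlb⟩
    rcases min_cases (lf 0) (lf p0) with ⟨h, _⟩ | ⟨h, _⟩ <;> rw [h]
    exacts [hmem 0 (Nat.zero_le _), hmem p0 le_rfl]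
  -- rational values of the extremal lengths
  have hAQ : ((lf 0 : ℕ) : ℚ) = m * ((y : ℚ) * c - x * ((d : ℚ) - 1)) := by
    have hv : lf 0 = p0 + r0 := by simp [hlf]
    rw [hv]
    push_cast
    linear_combination hp0Q + hr0Q
  have hBQ : ((lf p0 : ℕ) : ℚ) =
      m * ((c : ℚ) * ((y : ℚ) * ((c : ℚ) - a) - (x : ℚ) * ((d : ℚ) - b))) := by
    have hv : lf p0 = c * p0 + (r0 - a * p0) := by simp [hlf]
    rw [hv]
    push_cast [Nat.cast_sub hap0]
    linear_combination ((c : ℚ) - a) * hp0Q + hr0Q - (m : ℚ) * x * hstarQ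
  have hmQ : (m : ℚ) ≠ 0 := by exact_mod_cast hm0.ne'
  have hkey : (lf p0 : ℤ) = (lf 0 : ℤ) + ((c : ℤ) - a - 1) * p0 := by
    rw [hlfZ p0 le_rfl, hlfZ 0 (Nat.zero_le _)]
    ring
  rw [hSup, hInf]
  rcases lt_trichotomy ((c : ℤ) - a - 1) 0 with he | he | he
  · have hτ' : τ = -1 := by rw [hτ, Int.sign_eq_neg_one_iff_neg.mpr he]
    have hBA : lf p0 ≤ lf 0 := by
      have : (lf p0 : ℤ) ≤ (lf 0 : ℤ) := by
        rw [hkey]; nlinarith [Int.natCast_nonneg p0]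
      exact_mod_cast this
    rw [max_eq_left hBA, min_eq_right hBA, hτ', zpow_neg, zpow_one, inv_div, hAQ, hBQ,
      mul_div_mul_left _ _ hmQ]
  · have hτ' : τ = 0 := by rw [hτ, he, Int.sign_zero]
    have hBA : lf p0 = lf 0 := by
      have : (lf p0 : ℤ) = (lf 0 : ℤ) := by rw [hkey, he]; ring
      exact_mod_cast this
    rw [hBA, max_self, min_self, hτ', zpow_zero]
    exact div_self (by exact_mod_cast hlA0.ne')
  · have hτ' : τ = 1 := by rw [hτ, Int.sign_eq_one_iff_pos.mpr he]
    have hAB : lf 0 ≤ lf p0 := by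
      have : (lf 0 : ℤ) ≤ (lf p0 : ℤ) := by
        rw [hkey]; nlinarith [Int.natCast_nonneg p0]
      exact_mod_cast this
    rw [max_eq_right hAB, min_eq_left hAB, hτ', zpow_one, hBQ, hAQ,
      mul_div_mul_left _ _ hmQ]
end

section
/- Assume the standing hypotheses, let s = (x,y) ∈ S with s ≠ (0,0), and let τ = sign(c−a−1) ∈ {−1,0,1}. Then the sequence k ↦ ρ(k·s) of elasticities (viewed in ℝ) converges as k → ∞, with limit ( (c·(y·a − x·(b−1))) / (a·(y·c − x·(d−1))) )^τ if x·b ≤ y·a, and limit ( c·(y·(c−a) − x·(d−b)) / (y·c − x·(d−1)) )^τ if x·b ≥ y·a. -/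
open Filter

private lemma aux_tendsto_ratio (f : ℕ → ℕ) (c : ℕ) (hc : 0 < c) (C D : ℤ)
    (h : ∀ᶠ k in atTop, |(c : ℤ) * f k - k * C| ≤ D) :
    Tendsto (fun k : ℕ => (f k : ℝ) / k) atTop (nhds ((C : ℝ) / c)) := by
  have hc0 : (0:ℝ) < (c:ℝ) := by exact_mod_cast hc
  have hD : Tendsto (fun k : ℕ => (D : ℝ) / ((c:ℝ) * k)) atTop (nhds 0) := by
    apply Tendsto.div_atTop tendsto_const_nhds
    exact (tendsto_natCast_atTop_atTop).const_mul_atTop hc0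
  have hsq : Tendsto (fun k : ℕ => (f k : ℝ) / k - (C:ℝ)/c) atTop (nhds 0) := by
    apply squeeze_zero_norm' _ hD
    filter_upwards [h, eventually_ge_atTop 1] with k hk hk1
    have hk0 : (0:ℝ) < (k:ℝ) := by exact_mod_cast hk1
    have he : (f k : ℝ) / k - (C:ℝ)/c = ((c:ℝ) * f k - k * C) / ((c:ℝ) * k) := by
      field_simp
    have habs : |(c:ℝ) * (f k : ℝ) - (k:ℝ) * (C:ℝ)| ≤ (D:ℝ) := by
      have : ((|(c : ℤ) * f k - k * C| : ℤ) : ℝ) ≤ ((D:ℤ):ℝ) := by exact_mod_cast hk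
      push_cast at this
      convert this using 3
    rw [Real.norm_eq_abs, he, abs_div, abs_of_pos (by positivity : (0:ℝ) < (c:ℝ)*k)]
    exact div_le_div_of_nonneg_right habs (by positivity) |>.trans (le_refl _)
  have := hsq.add (tendsto_const_nhds (x := (C:ℝ)/c))
  simpa using this

set_option maxHeartbeats 3200000 in
/-- Standing hypotheses; s = (x,y) ∈ S nonzero, τ = sign(c−a−1).  The sequence
k ↦ ρ(k·s) of elasticities (ratio of maximal to minimal factorization length of
(k·x, k·y), viewed in ℝ) converges as k → ∞, with limit
( c·(y·a − x·(b−1)) / (a·(y·c − x·(d−1))) )^τ when x·b ≤ y·a, and limit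
( c·(y·(c−a) − x·(d−b)) / (y·c − x·(d−1)) )^τ when x·b ≥ y·a. -/
theorem embdim3_elasticity_limit (a b c d : ℕ) (ha : 0 < a)
    (hb : 0 < b) (hc : 0 < c) (hstar : b * c = a * d + 1) (x y : ℕ)
    (hs : (x, y) ∈ AddSubmonoid.closure
        ({((0 : ℕ), (1 : ℕ)), (a, b), (c, d)} : Set (ℕ × ℕ)))
    (hs0 : (x, y) ≠ ((0 : ℕ), (0 : ℕ)))
    (τ : ℤ) (hτ : τ = Int.sign ((c : ℤ) - a - 1))
    (L : ℕ → Set ℕ)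
    (hL : ∀ k, L k = {ℓ : ℕ | ∃ p q r : ℕ,
      p • ((0 : ℕ), (1 : ℕ)) + q • ((a, b) : ℕ × ℕ) + r • ((c, d) : ℕ × ℕ) =
          (k * x, k * y) ∧ p + q + r = ℓ}) :
    (x * b ≤ y * a →
      Filter.Tendsto (fun k : ℕ => ((sSup (L k) : ℕ) : ℝ) / ((sInf (L k) : ℕ) : ℝ))
        Filter.atTop
        (nhds (((c : ℝ) * ((y : ℝ) * a - (x : ℝ) * ((b : ℝ) - 1)) /
          ((a : ℝ) * ((y : ℝ) * c - (x : ℝ) * ((d : ℝ) - 1)))) ^ τ))) ∧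
    (y * a ≤ x * b →
      Filter.Tendsto (fun k : ℕ => ((sSup (L k) : ℕ) : ℝ) / ((sInf (L k) : ℕ) : ℝ))
        Filter.atTop
        (nhds (((c : ℝ) * ((y : ℝ) * ((c : ℝ) - a) - (x : ℝ) * ((d : ℝ) - b)) /
          ((y : ℝ) * c - (x : ℝ) * ((d : ℝ) - 1))) ^ τ))) := by
  classical
  -- base factorization of (x,y)
  obtain ⟨p0, q0, r0, hx0, hy0⟩ : ∃ p q r : ℕ, q*a + r*c = x ∧ p + q*b + r*d = y := by
    have : ∀ z ∈ AddSubmonoid.closure ({((0 : ℕ), (1 : ℕ)), (a, b), (c, d)} : Set (ℕ × ℕ)),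
        ∃ p q r : ℕ, q*a + r*c = z.1 ∧ p + q*b + r*d = z.2 := by
      intro z hz
      induction hz using AddSubmonoid.closure_induction with
      | mem w hw =>
        rcases hw with h | h | h <;> subst h
        · exact ⟨1, 0, 0, by simp, by simp⟩
        · exact ⟨0, 1, 0, by simp, by simp⟩
        · exact ⟨0, 0, 1, by simp, by simp⟩
      | zero => exact ⟨0, 0, 0, by simp, by simp⟩
      | add z w _ _ hz hw =>
        obtain ⟨p1, q1, r1, h1, h2⟩ := hz
        obtain ⟨p2, q2, r2, h3, h4⟩ := hw
        exact ⟨p1+p2, q1+q2, r1+r2, by simp [Prod.fst_add]; ring_nf; omega,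
          by simp [Prod.snd_add]; ring_nf; omega⟩
    exact this _ hs
  -- membership description
  have hmem : ∀ k ℓ : ℕ, ℓ ∈ L k ↔
      ∃ p q r : ℕ, q*a + r*c = k*x ∧ p + q*b + r*d = k*y ∧ p+q+r = ℓ := by
    intro k ℓ
    rw [hL]
    simp only [Set.mem_setOf_eq, Prod.smul_mk, smul_eq_mul, Prod.mk_add_mk, Prod.mk.injEq]
    constructor <;> rintro ⟨p, q, r, h⟩ <;> exact ⟨p, q, r, by omega⟩
  set e : ℤ := (c:ℤ) - a - 1 with hedef
  set A : ℤ := (y:ℤ)*a - (x:ℤ)*((b:ℤ)-1) with hAdef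
  set B : ℤ := (y:ℤ)*((c:ℤ)-(a:ℤ)) - (x:ℤ)*((d:ℤ)-(b:ℤ)) with hBdef
  set C2 : ℤ := (y:ℤ)*c - (x:ℤ)*((d:ℤ)-1) with hC2def
  have hstarZ : (b:ℤ) * c = (a:ℤ) * d + 1 := by exact_mod_cast hstar
  -- key identities
  have key : ∀ k p q r : ℕ, q*a + r*c = k*x → p + q*b + r*d = k*y →
      ((c:ℤ)*(p+q+r) = k*C2 + q*e ∧ (a:ℤ)*(p+q+r) = k*A - r*e ∧
        ((p:ℤ)+q+r) = k*B - p*e) := by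
    intro k p q r h1 h2
    have hq : (q:ℤ)*a + r*c = k*x := by exact_mod_cast h1
    have hp : (p:ℤ) + q*b + r*d = k*y := by exact_mod_cast h2
    refine ⟨?_, ?_, ?_⟩
    · rw [hC2def, hedef]; linear_combination (c:ℤ)*hp + (1-(d:ℤ))*hq - (q:ℤ)*hstarZ
    · rw [hAdef, hedef]; linear_combination (a:ℤ)*hp + (1-(b:ℤ))*hq + (r:ℤ)*hstarZ
    · rw [hBdef, hedef]
      linear_combination ((c:ℤ)-(a:ℤ))*hp + ((b:ℤ)-(d:ℤ))*hq - ((q:ℤ)+(r:ℤ))*hstarZ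
  -- nonemptiness and boundedness
  have hne : ∀ k, (L k).Nonempty := by
    intro k
    exact ⟨k*(p0+q0+r0), (hmem k _).2 ⟨k*p0, k*q0, k*r0,
      by rw [← hx0]; ring, by rw [← hy0]; ring, by ring⟩⟩
  have hbdd : ∀ k, BddAbove (L k) := by
    intro k
    refine ⟨k*x + 2*(k*y), fun ℓ hℓ => ?_⟩
    obtain ⟨p, q, r, h1, h2, h3⟩ := (hmem k ℓ).1 hℓ
    have hr : r ≤ r*c := Nat.le_mul_of_pos_right r hc
    have hq2 : q ≤ q*b := Nat.le_mul_of_pos_right q hb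
    omega
  set M : ℕ → ℕ := fun k => sSup (L k) with hMdef
  set m : ℕ → ℕ := fun k => sInf (L k) with hmdef
  have hMmem : ∀ k, M k ∈ L k := fun k => Nat.sSup_mem (hne k) (hbdd k)
  have hmmem : ∀ k, m k ∈ L k := fun k => Nat.sInf_mem (hne k)
  have hmpos : ∀ k, 1 ≤ k → 1 ≤ m k := by
    intro k hk
    obtain ⟨p, q, r, h1, h2, h3⟩ := (hmem k (m k)).1 (hmmem k)
    by_contra h
    have hm0 : m k = 0 := by omega
    have : p = 0 ∧ q = 0 ∧ r = 0 := by omega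
    obtain ⟨hp, hq, hr⟩ := this
    subst hp; subst hq; subst hr
    simp at h1 h2
    apply hs0
    have hx : x = 0 := by rcases h1 with h | h; omega; omega
    have hy : y = 0 := by rcases h2 with h | h; omega; omega
    simp [hx, hy]
  -- basic identity: y*c = x*d + (p0*c + q0)
  have hycn : y*c = x*d + (p0*c + q0) := by
    calc y*c = p0*c + q0*(b*c) + r0*(d*c) := by rw [← hy0]; ring
    _ = p0*c + q0*(a*d+1) + r0*(d*c) := by rw [hstar]
    _ = (q0*a + r0*c)*d + (p0*c + q0) := by ring
    _ = x*d + (p0*c + q0) := by rw [hx0]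
  -- positivity of C2
  have hxy0 : p0*c + q0 + x ≠ 0 := by
    intro h
    have hx : x = 0 := by omega
    have hq0 : q0 = 0 := by omega
    have hp0 : p0 = 0 := by
      have h1 : p0 * c = 0 := by omega
      rcases Nat.mul_eq_zero.1 h1 with h2 | h2
      · exact h2
      · omega
    have hr0 : r0 = 0 := by
      have h1 : r0*c = 0 := by rw [hq0, hx] at hx0; simpa using hx0
      rcases Nat.mul_eq_zero.1 h1 with h2 | h2
      · exact h2
      · omega
    apply hs0
    rw [hp0, hq0, hr0] at hy0
    have hy' : y = 0 := by simpa using hy0.symm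
    rw [hx, hy']
  have hC2n : C2 = ((p0*c + q0 + x : ℕ) : ℤ) := by
    have h1 : ((y*c : ℕ):ℤ) = ((x*d + (p0*c+q0) : ℕ):ℤ) := by exact_mod_cast congrArg Nat.cast hycn
    push_cast at h1 ⊢
    rw [hC2def]; linarith
  have hC2pos : 0 < C2 := by
    rw [hC2n]
    exact_mod_cast Nat.pos_of_ne_zero hxy0
  -- min-q construction
  have hminq : ∀ k, c ≤ k → ∃ ℓ ∈ L k, ∃ q : ℕ, q < c ∧ (c:ℤ)*ℓ = k*C2 + q*e := by
    intro k hk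
    set t := k*q0 / c with ht
    set q := k*q0 % c with hq
    have h1 : q + t*c = k*q0 := by rw [hq, ht]; exact Nat.mod_add_div' (k*q0) c
    have hqlt : q < c := Nat.mod_lt _ hc
    set r := k*r0 + t*a with hr
    have hqa : q*a + r*c = k*x := by
      calc q*a + r*c = (q + t*c)*a + (k*r0)*c := by rw [hr]; ring
      _ = (k*q0)*a + (k*r0)*c := by rw [h1]
      _ = k*(q0*a + r0*c) := by ring
      _ = k*x := by rw [hx0]
    have hle : q*b + r*d ≤ k*y := by
      have step1 : c*(q*b + r*d) = q + (k*x)*d := by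
        calc c*(q*b + r*d) = q*(b*c) + (r*c)*d := by ring
        _ = q*(a*d+1) + (r*c)*d := by rw [hstar]
        _ = (q*a + r*c)*d + q := by ring
        _ = (k*x)*d + q := by rw [hqa]
        _ = q + (k*x)*d := by ring
      have hq_le : q ≤ k*(p0*c + q0) := by
        rcases Nat.eq_zero_or_pos (p0*c + q0) with h0 | h0
        · have hq00 : q0 = 0 := by omega
          have : q = 0 := by rw [hq, hq00]; simp
          omega
        · calc q ≤ c := le_of_lt hqlt
          _ ≤ k := hk
          _ ≤ k*(p0*c+q0) := Nat.le_mul_of_pos_right k h0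
      have step2 : c*(q*b + r*d) ≤ c*(k*y) := by
        rw [step1]
        calc q + (k*x)*d ≤ k*(p0*c+q0) + (k*x)*d := by omega
        _ = k*(x*d + (p0*c+q0)) := by ring
        _ = k*(y*c) := by rw [← hycn]
        _ = c*(k*y) := by ring
      exact Nat.le_of_mul_le_mul_left step2 hc
    refine ⟨(k*y - (q*b + r*d)) + q + r,
      (hmem k _).2 ⟨k*y - (q*b+r*d), q, r, hqa, by omega, rfl⟩, q, hqlt, ?_⟩
    have hk2 := (key k (k*y - (q*b+r*d)) q r hqa (by omega)).1
    push_cast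
    push_cast at hk2
    linarith
  -- min-r construction (first branch)
  have hminr : x*b ≤ y*a → ∀ k, ∃ ℓ ∈ L k, ∃ r : ℕ, r < a ∧ (a:ℤ)*ℓ = k*A - r*e := by
    intro hxbya k
    set t := k*r0 / a with ht
    set r := k*r0 % a with hr
    have h1 : r + t*a = k*r0 := by rw [hr, ht]; exact Nat.mod_add_div' (k*r0) a
    have hrlt : r < a := Nat.mod_lt _ ha
    set q := k*q0 + t*c with hq
    have hqa : q*a + r*c = k*x := by
      calc q*a + r*c = (k*q0)*a + (r + t*a)*c := by rw [hq]; ring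
      _ = (k*q0)*a + (k*r0)*c := by rw [h1]
      _ = k*(q0*a + r0*c) := by ring
      _ = k*x := by rw [hx0]
    have hle : q*b + r*d ≤ k*y := by
      have step1 : a*(q*b + r*d) + r = (k*x)*b := by
        calc a*(q*b+r*d) + r = (q*a)*b + r*(a*d+1) := by ring
        _ = (q*a)*b + r*(b*c) := by rw [← hstar]
        _ = (q*a + r*c)*b := by ring
        _ = (k*x)*b := by rw [hqa]
      have step2 : a*(q*b + r*d) ≤ a*(k*y) := by
        have h3 : k*(x*b) ≤ k*(y*a) := Nat.mul_le_mul_left k hxbya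
        calc a*(q*b+r*d) ≤ (k*x)*b := by omega
        _ = k*(x*b) := by ring
        _ ≤ k*(y*a) := h3
        _ = a*(k*y) := by ring
      exact Nat.le_of_mul_le_mul_left step2 ha
    refine ⟨(k*y - (q*b + r*d)) + q + r,
      (hmem k _).2 ⟨k*y - (q*b+r*d), q, r, hqa, by omega, rfl⟩, r, hrlt, ?_⟩
    have hk2 := (key k (k*y - (q*b+r*d)) q r hqa (by omega)).2.1
    push_cast
    push_cast at hk2
    linarith
  -- p = 0 construction (second branch)
  have hp0c : y*a ≤ x*b → ∃ Bn : ℕ, (Bn:ℤ) = B ∧ ∀ k, (k*Bn) ∈ L k := by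
    intro hba
    set n := p0*c + q0 with hn
    set w2 := x*b - y*a with hw2
    have hw2Z : (w2:ℤ) = (x:ℤ)*b - (y:ℤ)*a := by
      rw [hw2, Nat.cast_sub hba]; push_cast; ring
    have hnZ : (n:ℤ) = (y:ℤ)*c - (x:ℤ)*d := by
      have h1 : ((y*c : ℕ):ℤ) = ((x*d + n : ℕ):ℤ) := by exact_mod_cast congrArg Nat.cast hycn
      push_cast at h1
      linarith
    have hnw : n*a + w2*c = x := by
      have h1 : ((n*a + w2*c : ℕ):ℤ) = (x:ℤ) := by
        push_cast
        rw [hw2Z, hnZ]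
        linear_combination (x:ℤ)*hstarZ
      exact_mod_cast h1
    have hnw2 : n*b + w2*d = y := by
      have h1 : ((n*b + w2*d : ℕ):ℤ) = (y:ℤ) := by
        push_cast
        rw [hw2Z, hnZ]
        linear_combination (y:ℤ)*hstarZ
      exact_mod_cast h1
    refine ⟨n + w2, ?_, ?_⟩
    · push_cast
      rw [hnZ, hw2Z, hBdef]; ring
    · intro k
      refine (hmem k _).2 ⟨0, k*n, k*w2, ?_, ?_, by ring⟩
      · calc (k*n)*a + (k*w2)*c = k*(n*a + w2*c) := by ring
        _ = k*x := by rw [hnw]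
      · calc 0 + (k*n)*b + (k*w2)*d = k*(n*b + w2*d) := by ring
        _ = k*y := by rw [hnw2]
  -- identities for arbitrary members
  have hall : ∀ k ℓ, ℓ ∈ L k → ∃ p q r : ℕ,
      (c:ℤ)*ℓ = k*C2 + q*e ∧ (a:ℤ)*ℓ = k*A - r*e ∧ (ℓ:ℤ) = k*B - p*e := by
    intro k ℓ hℓ
    obtain ⟨p, q, r, h1, h2, h3⟩ := (hmem k ℓ).1 hℓ
    obtain ⟨k1, k2, k3⟩ := key k p q r h1 h2
    have hcast : (ℓ:ℤ) = (p:ℤ) + q + r := by exact_mod_cast h3.symm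
    exact ⟨p, q, r, by rw [hcast]; exact k1, by rw [hcast]; exact k2, by rw [hcast]; exact k3⟩
  -- real casts of the constants
  have hAR : ((A:ℤ):ℝ) = (y:ℝ)*a - (x:ℝ)*((b:ℝ)-1) := by rw [hAdef]; push_cast; ring
  have hC2R : ((C2:ℤ):ℝ) = (y:ℝ)*c - (x:ℝ)*((d:ℝ)-1) := by rw [hC2def]; push_cast; ring
  have hBR : ((B:ℤ):ℝ) = (y:ℝ)*((c:ℝ)-a) - (x:ℝ)*((d:ℝ)-b) := by rw [hBdef]; push_cast; ring
  have hC2Rpos : (0:ℝ) < ((C2:ℤ):ℝ) := by exact_mod_cast hC2pos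
  have haR : (0:ℝ) < (a:ℝ) := by exact_mod_cast ha
  have hcR : (0:ℝ) < (c:ℝ) := by exact_mod_cast hc
  -- combiner
  have comb : ∀ (β α : ℝ), α ≠ 0 →
      Tendsto (fun k : ℕ => ((M k) : ℝ)/k) atTop (nhds β) →
      Tendsto (fun k : ℕ => ((m k) : ℝ)/k) atTop (nhds α) →
      Tendsto (fun k : ℕ => ((sSup (L k) : ℕ) : ℝ) / ((sInf (L k) : ℕ) : ℝ))
        atTop (nhds (β/α)) := by
    intro β α hα h1 h2
    have h3 := h1.div h2 hα
    apply h3.congr'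
    filter_upwards [eventually_ge_atTop 1] with k hk
    have hk0 : (k:ℝ) ≠ 0 := Nat.cast_ne_zero.2 (by omega)
    show ((M k):ℝ)/k / (((m k):ℝ)/k) = _
    rw [div_div_div_comm, div_self hk0, div_one]
  -- positivity of A, B under branch hypotheses
  have hApos' : x*b ≤ y*a → 0 < A := by
    intro hxbya
    have h1 : A = ((y*a:ℕ):ℤ) - ((x*b:ℕ):ℤ) + ((x:ℕ):ℤ) := by rw [hAdef]; push_cast; ring
    have h4 : ((x*b:ℕ):ℤ) ≤ ((y*a:ℕ):ℤ) := by exact_mod_cast hxbya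
    rcases Nat.eq_zero_or_pos x with hx | hx
    · have hy : 0 < y := by
        rcases Nat.eq_zero_or_pos y with hy | hy
        · exact absurd (by rw [hx, hy]) hs0
        · exact hy
      have h5 : (0:ℤ) < ((y*a:ℕ):ℤ) := by exact_mod_cast Nat.mul_pos hy ha
      have h6 : ((x*b:ℕ):ℤ) = 0 := by rw [hx]; simp
      rw [h1]
      have h7 : ((x:ℕ):ℤ) = 0 := by exact_mod_cast hx
      linarith
    · have h5 : (0:ℤ) < ((x:ℕ):ℤ) := by exact_mod_cast hx
      rw [h1]; linarith
  have hBpos' : y*a ≤ x*b → 0 < B := by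
    intro hba
    have h1 : B = ((y*c:ℕ):ℤ) - ((x*d:ℕ):ℤ) + (((x*b:ℕ):ℤ) - ((y*a:ℕ):ℤ)) := by
      rw [hBdef]; push_cast; ring
    rcases Nat.eq_zero_or_pos (p0*c + q0) with h0 | h0
    · have hq00 : q0 = 0 := by omega
      have hp00 : p0*c = 0 := by omega
      have hxr : r0*c = x := by rw [hq00] at hx0; simpa using hx0
      have hyr : r0*d = y := by
        have : p0 = 0 := by
          rcases Nat.mul_eq_zero.1 hp00 with h2 | h2
          · exact h2
          · omega
        rw [this, hq00] at hy0; simpa using hy0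
      have hxb : x*b = y*a + r0 := by
        calc x*b = r0*(b*c) := by rw [← hxr]; ring
        _ = r0*(a*d+1) := by rw [hstar]
        _ = (r0*d)*a + r0 := by ring
        _ = y*a + r0 := by rw [hyr]
      have hr0pos : 0 < r0 := by
        rcases Nat.eq_zero_or_pos r0 with h2 | h2
        · exfalso
          have hx' : x = 0 := by rw [h2] at hxr; omega
          have hy' : y = 0 := by rw [h2] at hyr; omega
          exact hs0 (by rw [hx', hy'])
        · exact h2
      have h2 : ((y*c:ℕ):ℤ) = ((x*d:ℕ):ℤ) + ((p0*c+q0:ℕ):ℤ) := by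
        exact_mod_cast congrArg Nat.cast hycn
      have h3 : ((p0*c+q0:ℕ):ℤ) = 0 := by exact_mod_cast h0
      have h4 : ((x*b:ℕ):ℤ) = ((y*a:ℕ):ℤ) + ((r0:ℕ):ℤ) := by exact_mod_cast congrArg Nat.cast hxb
      have h5 : (0:ℤ) < ((r0:ℕ):ℤ) := by exact_mod_cast hr0pos
      rw [h1]; linarith
    · have h2 : ((y*c:ℕ):ℤ) = ((x*d:ℕ):ℤ) + ((p0*c+q0:ℕ):ℤ) := by
        exact_mod_cast congrArg Nat.cast hycn
      have h3 : (0:ℤ) < ((p0*c+q0:ℕ):ℤ) := by exact_mod_cast h0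
      have h4 : ((y*a:ℕ):ℤ) ≤ ((x*b:ℕ):ℤ) := by exact_mod_cast hba
      rw [h1]; linarith
  refine ⟨?_, ?_⟩
  · -- first branch : x*b ≤ y*a
    intro hxbya
    have hApos : 0 < A := hApos' hxbya
    have hARpos : (0:ℝ) < ((A:ℤ):ℝ) := by exact_mod_cast hApos
    rcases lt_trichotomy e 0 with hesgn | hesgn | hesgn
    · -- e < 0, τ = -1
      have hτ1 : τ = -1 := by rw [hτ]; exact Int.sign_eq_neg_one_of_neg hesgn
      have hMconv : Tendsto (fun k : ℕ => ((M k):ℝ)/k) atTop (nhds (((C2:ℤ):ℝ)/c)) := by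
        apply aux_tendsto_ratio _ c hc C2 (c*(-e))
        filter_upwards [eventually_ge_atTop c] with k hk
        obtain ⟨ℓ1, hℓ1, qq, hqlt, hid⟩ := hminq k hk
        obtain ⟨p, q, r, hcℓ, -, -⟩ := hall k (M k) (hMmem k)
        have hqe : (q:ℤ)*e ≤ 0 :=
          mul_nonpos_of_nonneg_of_nonpos (by positivity) hesgn.le
        have hle1 : (ℓ1:ℤ) ≤ (M k:ℤ) := by
          exact_mod_cast le_csSup (hbdd k) hℓ1
        have hmul : (c:ℤ)*ℓ1 ≤ (c:ℤ)*(M k) :=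
          mul_le_mul_of_nonneg_left hle1 (by positivity)
        have h6 : (c:ℤ)*e ≤ (qq:ℤ)*e :=
          mul_le_mul_of_nonpos_right (by exact_mod_cast hqlt.le) hesgn.le
        have h9 : (qq:ℤ)*e ≤ 0 :=
          mul_nonpos_of_nonneg_of_nonpos (by positivity) hesgn.le
        rw [abs_le]
        constructor <;> [skip; skip] <;> linarith
      have hmconv : Tendsto (fun k : ℕ => ((m k):ℝ)/k) atTop (nhds (((A:ℤ):ℝ)/a)) := by
        apply aux_tendsto_ratio _ a ha A (a*(-e))
        filter_upwards [eventually_ge_atTop 1] with k hk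
        obtain ⟨ℓ1, hℓ1, rr, hrlt, hid⟩ := hminr hxbya k
        obtain ⟨p, q, r, -, haℓ, -⟩ := hall k (m k) (hmmem k)
        have hre : (r:ℤ)*e ≤ 0 :=
          mul_nonpos_of_nonneg_of_nonpos (by positivity) hesgn.le
        have hle1 : (m k:ℤ) ≤ (ℓ1:ℤ) := by exact_mod_cast Nat.sInf_le hℓ1
        have hmul : (a:ℤ)*(m k) ≤ (a:ℤ)*ℓ1 :=
          mul_le_mul_of_nonneg_left hle1 (by positivity)
        have h6 : (a:ℤ)*e ≤ (rr:ℤ)*e :=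
          mul_le_mul_of_nonpos_right (by exact_mod_cast hrlt.le) hesgn.le
        rw [abs_le]
        constructor <;> [skip; skip] <;> linarith
      rw [hτ1, zpow_neg_one]
      have htarget : (((c:ℝ) * ((y:ℝ)*a - (x:ℝ)*((b:ℝ)-1)) /
          ((a:ℝ) * ((y:ℝ)*c - (x:ℝ)*((d:ℝ)-1)))))⁻¹ = ((C2:ℤ):ℝ)/c / (((A:ℤ):ℝ)/a) := by
        rw [← hAR, ← hC2R, inv_div]
        field_simp
      rw [htarget]
      exact comb _ _ (div_pos hARpos haR).ne' hMconv hmconv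
    · -- e = 0, τ = 0
      have hτ0 : τ = 0 := by simp [hτ, hesgn]
      rw [hτ0, zpow_zero]
      refine Tendsto.congr' ?_ tendsto_const_nhds
      filter_upwards [eventually_ge_atTop 1] with k hk
      obtain ⟨p1, q1, r1, -, -, hMB⟩ := hall k (M k) (hMmem k)
      obtain ⟨p2, q2, r2, -, -, hmB⟩ := hall k (m k) (hmmem k)
      rw [hesgn] at hMB hmB
      simp only [mul_zero, sub_zero] at hMB hmB
      have hMm : M k = m k := by
        have : (M k:ℤ) = (m k:ℤ) := by rw [hMB, hmB]
        exact_mod_cast this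
      have hm0 : ((m k:ℕ):ℝ) ≠ 0 := Nat.cast_ne_zero.2 (by have := hmpos k hk; omega)
      show (1:ℝ) = _
      rw [show sSup (L k) = M k from rfl, show sInf (L k) = m k from rfl, hMm,
        div_self hm0]
    · -- e > 0, τ = 1
      have hτ1 : τ = 1 := by rw [hτ]; exact Int.sign_eq_one_of_pos hesgn
      have hMconv : Tendsto (fun k : ℕ => ((M k):ℝ)/k) atTop (nhds (((A:ℤ):ℝ)/a)) := by
        apply aux_tendsto_ratio _ a ha A (a*e)
        filter_upwards [eventually_ge_atTop 1] with k hk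
        obtain ⟨ℓ1, hℓ1, rr, hrlt, hid⟩ := hminr hxbya k
        obtain ⟨p, q, r, -, haℓ, -⟩ := hall k (M k) (hMmem k)
        have hre : (0:ℤ) ≤ (r:ℤ)*e := mul_nonneg (by positivity) hesgn.le
        have hle1 : (ℓ1:ℤ) ≤ (M k:ℤ) := by exact_mod_cast le_csSup (hbdd k) hℓ1
        have hmul : (a:ℤ)*ℓ1 ≤ (a:ℤ)*(M k) :=
          mul_le_mul_of_nonneg_left hle1 (by positivity)
        have h6 : (rr:ℤ)*e ≤ (a:ℤ)*e :=
          mul_le_mul_of_nonneg_right (by exact_mod_cast hrlt.le) hesgn.le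
        have h9 : (0:ℤ) ≤ (rr:ℤ)*e := mul_nonneg (by positivity) hesgn.le
        rw [abs_le]
        constructor <;> [skip; skip] <;> linarith
      have hmconv : Tendsto (fun k : ℕ => ((m k):ℝ)/k) atTop (nhds (((C2:ℤ):ℝ)/c)) := by
        apply aux_tendsto_ratio _ c hc C2 (c*e)
        filter_upwards [eventually_ge_atTop c] with k hk
        obtain ⟨ℓ1, hℓ1, qq, hqlt, hid⟩ := hminq k hk
        obtain ⟨p, q, r, hcℓ, -, -⟩ := hall k (m k) (hmmem k)
        have hqe : (0:ℤ) ≤ (q:ℤ)*e := mul_nonneg (by positivity) hesgn.le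
        have hle1 : (m k:ℤ) ≤ (ℓ1:ℤ) := by exact_mod_cast Nat.sInf_le hℓ1
        have hmul : (c:ℤ)*(m k) ≤ (c:ℤ)*ℓ1 :=
          mul_le_mul_of_nonneg_left hle1 (by positivity)
        have h6 : (qq:ℤ)*e ≤ (c:ℤ)*e :=
          mul_le_mul_of_nonneg_right (by exact_mod_cast hqlt.le) hesgn.le
        have h9 : (0:ℤ) ≤ (qq:ℤ)*e := mul_nonneg (by positivity) hesgn.le
        rw [abs_le]
        constructor <;> [skip; skip] <;> linarith
      rw [hτ1, zpow_one]
      have htarget : ((c:ℝ) * ((y:ℝ)*a - (x:ℝ)*((b:ℝ)-1)) /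
          ((a:ℝ) * ((y:ℝ)*c - (x:ℝ)*((d:ℝ)-1)))) = ((A:ℤ):ℝ)/a / (((C2:ℤ):ℝ)/c) := by
        rw [← hAR, ← hC2R]
        field_simp
      rw [htarget]
      exact comb _ _ (div_pos hC2Rpos hcR).ne' hMconv hmconv
  · -- second branch : y*a ≤ x*b
    intro hba
    have hBpos : 0 < B := hBpos' hba
    have hBRpos : (0:ℝ) < ((B:ℤ):ℝ) := by exact_mod_cast hBpos
    obtain ⟨Bn, hBnZ, hBnmem⟩ := hp0c hba
    rcases lt_trichotomy e 0 with hesgn | hesgn | hesgn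
    · -- e < 0, τ = -1
      have hτ1 : τ = -1 := by rw [hτ]; exact Int.sign_eq_neg_one_of_neg hesgn
      have hMconv : Tendsto (fun k : ℕ => ((M k):ℝ)/k) atTop (nhds (((C2:ℤ):ℝ)/c)) := by
        apply aux_tendsto_ratio _ c hc C2 (c*(-e))
        filter_upwards [eventually_ge_atTop c] with k hk
        obtain ⟨ℓ1, hℓ1, qq, hqlt, hid⟩ := hminq k hk
        obtain ⟨p, q, r, hcℓ, -, -⟩ := hall k (M k) (hMmem k)
        have hqe : (q:ℤ)*e ≤ 0 :=
          mul_nonpos_of_nonneg_of_nonpos (by positivity) hesgn.le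
        have hle1 : (ℓ1:ℤ) ≤ (M k:ℤ) := by
          exact_mod_cast le_csSup (hbdd k) hℓ1
        have hmul : (c:ℤ)*ℓ1 ≤ (c:ℤ)*(M k) :=
          mul_le_mul_of_nonneg_left hle1 (by positivity)
        have h6 : (c:ℤ)*e ≤ (qq:ℤ)*e :=
          mul_le_mul_of_nonpos_right (by exact_mod_cast hqlt.le) hesgn.le
        have h9 : (qq:ℤ)*e ≤ 0 :=
          mul_nonpos_of_nonneg_of_nonpos (by positivity) hesgn.le
        rw [abs_le]
        constructor <;> [skip; skip] <;> linarith
      have hmeq : ∀ k, m k = k*Bn := by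
        intro k
        refine le_antisymm (Nat.sInf_le (hBnmem k)) ?_
        obtain ⟨p, q, r, -, -, hBℓ⟩ := hall k (m k) (hmmem k)
        have hpe : (p:ℤ)*e ≤ 0 :=
          mul_nonpos_of_nonneg_of_nonpos (by positivity) hesgn.le
        have hkBn : ((k*Bn:ℕ):ℤ) = (k:ℤ)*B := by push_cast; rw [hBnZ]
        have h7 : ((k*Bn:ℕ):ℤ) ≤ (m k:ℤ) := by rw [hkBn]; linarith
        exact_mod_cast h7
      have hmconv : Tendsto (fun k : ℕ => ((m k):ℝ)/k) atTop (nhds (((B:ℤ):ℝ)/1)) := by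
        refine Tendsto.congr' ?_ tendsto_const_nhds
        filter_upwards [eventually_ge_atTop 1] with k hk
        have hk0 : (k:ℝ) ≠ 0 := Nat.cast_ne_zero.2 (by omega)
        have hBnR : ((Bn:ℕ):ℝ) = ((B:ℤ):ℝ) := by exact_mod_cast hBnZ
        rw [hmeq k, div_one, ← hBnR, Nat.cast_mul, mul_comm (k:ℝ), mul_div_assoc,
          div_self hk0, mul_one]
      rw [hτ1, zpow_neg_one]
      have htarget : (((c:ℝ) * ((y:ℝ)*((c:ℝ)-a) - (x:ℝ)*((d:ℝ)-b)) /
          ((y:ℝ)*c - (x:ℝ)*((d:ℝ)-1))))⁻¹ = ((C2:ℤ):ℝ)/c / (((B:ℤ):ℝ)/1) := by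
        rw [← hBR, ← hC2R, inv_div]
        field_simp
      rw [htarget]
      exact comb _ _ (div_pos hBRpos one_pos).ne' hMconv hmconv
    · -- e = 0, τ = 0
      have hτ0 : τ = 0 := by simp [hτ, hesgn]
      rw [hτ0, zpow_zero]
      refine Tendsto.congr' ?_ tendsto_const_nhds
      filter_upwards [eventually_ge_atTop 1] with k hk
      obtain ⟨p1, q1, r1, -, -, hMB⟩ := hall k (M k) (hMmem k)
      obtain ⟨p2, q2, r2, -, -, hmB⟩ := hall k (m k) (hmmem k)
      rw [hesgn] at hMB hmB
      simp only [mul_zero, sub_zero] at hMB hmB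
      have hMm : M k = m k := by
        have : (M k:ℤ) = (m k:ℤ) := by rw [hMB, hmB]
        exact_mod_cast this
      have hm0 : ((m k:ℕ):ℝ) ≠ 0 := Nat.cast_ne_zero.2 (by have := hmpos k hk; omega)
      show (1:ℝ) = _
      rw [show sSup (L k) = M k from rfl, show sInf (L k) = m k from rfl, hMm,
        div_self hm0]
    · -- e > 0, τ = 1
      have hτ1 : τ = 1 := by rw [hτ]; exact Int.sign_eq_one_of_pos hesgn
      have hMeq : ∀ k, M k = k*Bn := by
        intro k
        refine le_antisymm ?_ (le_csSup (hbdd k) (hBnmem k))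
        obtain ⟨p, q, r, -, -, hBℓ⟩ := hall k (M k) (hMmem k)
        have hpe : (0:ℤ) ≤ (p:ℤ)*e := mul_nonneg (by positivity) hesgn.le
        have hkBn : ((k*Bn:ℕ):ℤ) = (k:ℤ)*B := by push_cast; rw [hBnZ]
        have h7 : (M k:ℤ) ≤ ((k*Bn:ℕ):ℤ) := by rw [hkBn]; linarith
        exact_mod_cast h7
      have hMconv : Tendsto (fun k : ℕ => ((M k):ℝ)/k) atTop (nhds (((B:ℤ):ℝ)/1)) := by
        refine Tendsto.congr' ?_ tendsto_const_nhds
        filter_upwards [eventually_ge_atTop 1] with k hk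
        have hk0 : (k:ℝ) ≠ 0 := Nat.cast_ne_zero.2 (by omega)
        have hBnR : ((Bn:ℕ):ℝ) = ((B:ℤ):ℝ) := by exact_mod_cast hBnZ
        rw [hMeq k, div_one, ← hBnR, Nat.cast_mul, mul_comm (k:ℝ), mul_div_assoc,
          div_self hk0, mul_one]
      have hmconv : Tendsto (fun k : ℕ => ((m k):ℝ)/k) atTop (nhds (((C2:ℤ):ℝ)/c)) := by
        apply aux_tendsto_ratio _ c hc C2 (c*e)
        filter_upwards [eventually_ge_atTop c] with k hk
        obtain ⟨ℓ1, hℓ1, qq, hqlt, hid⟩ := hminq k hk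
        obtain ⟨p, q, r, hcℓ, -, -⟩ := hall k (m k) (hmmem k)
        have hqe : (0:ℤ) ≤ (q:ℤ)*e := mul_nonneg (by positivity) hesgn.le
        have hle1 : (m k:ℤ) ≤ (ℓ1:ℤ) := by exact_mod_cast Nat.sInf_le hℓ1
        have hmul : (c:ℤ)*(m k) ≤ (c:ℤ)*ℓ1 :=
          mul_le_mul_of_nonneg_left hle1 (by positivity)
        have h6 : (qq:ℤ)*e ≤ (c:ℤ)*e :=
          mul_le_mul_of_nonneg_right (by exact_mod_cast hqlt.le) hesgn.le
        have h9 : (0:ℤ) ≤ (qq:ℤ)*e := mul_nonneg (by positivity) hesgn.le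
        rw [abs_le]
        constructor <;> [skip; skip] <;> linarith
      rw [hτ1, zpow_one]
      have htarget : ((c:ℝ) * ((y:ℝ)*((c:ℝ)-a) - (x:ℝ)*((d:ℝ)-b)) /
          ((y:ℝ)*c - (x:ℝ)*((d:ℝ)-1))) = ((B:ℤ):ℝ)/1 / (((C2:ℤ):ℝ)/c) := by
        rw [← hBR, ← hC2R]
        field_simp
      rw [htarget]
      exact comb _ _ (div_pos hC2Rpos hcR).ne' hMconv hmconv
end
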